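/- Averaging and restriction commute: for every TUX game w on player set N and every player i ∈ N, the subgame of the average game equals the average game of the restricted TUX game, i.e., (v̄_w)_{−i} = v̄_{(w_{−i})} as TU games on N\{i}. -/

import Mathlib

open Finset BigOperators

namespace TUX

/-- A (raw) game in partition function form: assigns a real worth to each
coalition together with a partition (of the outside players). -/
abbrev Game := Finset ℕ → Finset (Finset ℕ) → ℝ

/-- A TU game (characteristic function). -/
abbrev TUGame := Finset ℕ → ℝ

/-- A solution for TUX games: given a player set and a game, assigns payoffs. -/
abbrev Sol := Finset ℕ → Game → ℕ → ℝ

/-- `w` is a genuine TUX game: the empty coalition has worth 0. -/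
def IsTUX (w : Game) : Prop := ∀ π, w ∅ π = 0

/-- `π` is a partition of the finite set `M`. -/
def IsPartition (M : Finset ℕ) (π : Finset (Finset ℕ)) : Prop :=
  (∀ B ∈ π, B ⊆ M) ∧ ∅ ∉ π ∧ ∀ x ∈ M, (π.filter (fun B => x ∈ B)).card = 1

instance (M : Finset ℕ) : DecidablePred (IsPartition M) := fun π => by
  unfold IsPartition; infer_instance

/-- The finite set of all partitions of `M`. -/
def partitionsOf (M : Finset ℕ) : Finset (Finset (Finset ℕ)) :=
  (M.powerset.powerset).filter (IsPartition M)

/-- The Ewens(θ = 1) probability of the partition `π` of `M`: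
`p*_M(π) = ∏_{B ∈ π} (|B| - 1)! / |M|!`. -/
noncomputable def pstar (M : Finset ℕ) (π : Finset (Finset ℕ)) : ℝ :=
  (∏ B ∈ π, ((B.card - 1).factorial : ℝ)) / (M.card.factorial : ℝ)

/-- The block of `π` containing `j` (junk if `π` is not a partition containing `j`). -/
def blockOf (π : Finset (Finset ℕ)) (j : ℕ) : Finset ℕ :=
  (π.filter (fun B => j ∈ B)).sup id

/-- Add player `i` to the block `B` of `π`. -/
def addToBlock (π : Finset (Finset ℕ)) (i : ℕ) (B : Finset ℕ) : Finset (Finset ℕ) :=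
  insert (insert i B) (π.erase B)

/-- The restriction operator `r⋆` removing a single player `i` from a game on `N`:
`w₋ᵢ(S,π) = (1/(n-s)) (w(S, π₊ᵢ⇝∅) + ∑_{j ∈ N∖(S∪{i})} w(S, π₊ᵢ⇝π(j)))`. -/
noncomputable def restrict1 (N : Finset ℕ) (w : Game) (i : ℕ) : Game :=
  fun S π =>
    ((N.card : ℝ) - (S.card : ℝ))⁻¹ *
      (w S (insert {i} π) + ∑ j ∈ (N \ S).erase i, w S (addToBlock π i (blockOf π j)))

/-- Iterated removal of a list of players. -/
noncomputable def restrictL : Finset ℕ → Game → List ℕ → Game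
  | _, w, [] => w
  | N, w, i :: l => restrictL (N.erase i) (restrict1 N w i) l

/-- Removal of a set of players (via the increasing enumeration; by path
independence of `r⋆` the order is immaterial). -/
noncomputable def restrictSet (N : Finset ℕ) (w : Game) (T : Finset ℕ) : Game :=
  restrictL N w (T.sort (· ≤ ·))

/-- The average TU game `v̄_w` of a TUX game `w` on `N`. -/
noncomputable def avg (N : Finset ℕ) (w : Game) : TUGame :=
  fun S => ∑ π ∈ partitionsOf (N \ S), pstar (N \ S) π * w S π

/-- The auxiliary TU game `v*_w(S) = w₋(N∖S)(S,∅)`. -/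
noncomputable def auxGame (N : Finset ℕ) (w : Game) : TUGame :=
  fun S => restrictSet N w (N \ S) S ∅

/-- The Shapley value of a TU game on player set `N`. -/
noncomputable def shapley (N : Finset ℕ) (v : TUGame) (i : ℕ) : ℝ :=
  ∑ S ∈ (N.erase i).powerset,
    (((S.card.factorial : ℝ) * ((N.card - S.card - 1).factorial : ℝ)) / (N.card.factorial : ℝ)) *
      (v (insert i S) - v S)

/-- The MPW solution: the Shapley value of the average game. -/
noncomputable def MPW (N : Finset ℕ) (w : Game) (i : ℕ) : ℝ := shapley N (avg N w) i

/-- The MPW solution as a solution for TUX games. -/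
noncomputable def MPWsol : Sol := fun N w i => MPW N w i

/-- The scaled Dirac TUX game `δ_{T,τ}` on `N`. -/
noncomputable def scaledDirac (N T : Finset ℕ) (τ : Finset (Finset ℕ)) : Game :=
  fun S π => if S = T ∧ π = τ then (pstar (N \ T) τ)⁻¹ else 0

/-- `τ₋S`: remove the players of `S` from each block of `τ`, discarding empty blocks. -/
def partRemove (τ : Finset (Finset ℕ)) (S : Finset ℕ) : Finset (Finset ℕ) :=
  (τ.image (fun B => B \ S)).erase ∅

/-- The Sobolev-reduced TUX game `w₋ⱼ^{So,φ}` on `N ∖ {j}`. -/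
noncomputable def sobRed (N : Finset ℕ) (φ : Sol) (w : Game) (j : ℕ) : Game :=
  fun S π =>
    ((S.card : ℝ) / ((N.card : ℝ) - 1)) * (w (insert j S) π - φ N w j) +
      (1 - (S.card : ℝ) / ((N.card : ℝ) - 1)) * restrict1 N w j S π

/-- The Hart–Mas-Colell reduced TUX game `w₋T^{HM,φ}` on `N ∖ T`. -/
noncomputable def hmRed (N : Finset ℕ) (φ : Sol) (w : Game) (T : Finset ℕ) : Game :=
  fun S π => w (S ∪ T) π - ∑ j ∈ T, φ (S ∪ T) (restrictSet N w (N \ (S ∪ T))) j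

/-- Efficiency for TUX games. -/
def EfficientX (φ : Sol) : Prop :=
  ∀ (N : Finset ℕ) (w : Game), IsTUX w → ∑ i ∈ N, φ N w i = w N ∅

/-- Balanced contributions for TUX games (w.r.t. the restriction operator `r⋆`). -/
def BalancedContributionsX (φ : Sol) : Prop :=
  ∀ (N : Finset ℕ) (w : Game), IsTUX w → ∀ i ∈ N, ∀ j ∈ N,
    φ N w i - φ (N.erase j) (restrict1 N w j) i
      = φ N w j - φ (N.erase i) (restrict1 N w i) j

/-- 2-standardness for TUX games. -/
def TwoStandardX (φ : Sol) : Prop :=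
  ∀ i j : ℕ, i ≠ j → ∀ w : Game, IsTUX w →
    φ {i, j} w i
      = w {i} {({j} : Finset ℕ)}
        + (w {i, j} ∅ - w {j} {({i} : Finset ℕ)} - w {i} {({j} : Finset ℕ)}) / 2

/-- Sobolev consistency for TUX games. -/
def SobolevConsistentX (φ : Sol) : Prop :=
  ∀ (N : Finset ℕ) (w : Game), IsTUX w → ∀ i ∈ N, ∀ j ∈ N, i ≠ j →
    φ N w i = φ (N.erase j) (sobRed N φ w j) i

/-- Hart–Mas-Colell consistency (single-player removal) for TUX games. -/
def HMConsistentX (φ : Sol) : Prop :=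
  ∀ (N : Finset ℕ) (w : Game), IsTUX w → ∀ i ∈ N, ∀ j ∈ N, i ≠ j →
    φ N w i = φ (N.erase j) (hmRed N φ w {j}) i

/-- Set Hart–Mas-Colell consistency (removal of a coalition) for TUX games. -/
def SetHMConsistentX (φ : Sol) : Prop :=
  ∀ (N : Finset ℕ) (w : Game), IsTUX w → ∀ i ∈ N, ∀ T ⊆ N.erase i,
    φ N w i = φ (N \ T) (hmRed N φ w T) i

/-- The finite set of embedded coalitions `(T,τ)` of `N` with `T ≠ ∅`. -/
def embeddedNE (N : Finset ℕ) : Finset (Finset ℕ × Finset (Finset ℕ)) :=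
  (N.powerset ×ˢ N.powerset.powerset).filter
    (fun p => p.1.Nonempty ∧ IsPartition (N \ p.1) p.2)

end TUX

/-!
Deleting player `i` from a partition of `N ∖ S`, and remembering the block it sat in (`∅` if it
was a singleton), is a bijection onto the pairs `(σ, B)` with `σ` a partition of
`N ∖ (S ∪ {i})` and `B ∈ σ ∪ {∅}`; its inverse is `addToBlock`. Along this bijection the Ewens
weights factor as in the Chinese restaurant process: `p*(σ + i⇝B) = p*(σ) · |B| / (n - s)` and
`p*(σ + {i}) = p*(σ) / (n - s)`. Summing over `B` first turns the average of `w` into the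
average of `r*(w)`, whose sum over `j ∈ N ∖ (S ∪ {i})` meets each block `B` exactly `|B|` times.
-/

namespace TUX

theorem factorial_card_insert {α : Type*} [DecidableEq α] {s : Finset α} {a : α} (ha : a ∉ s) :
    ((#(insert a s)).factorial : ℝ) = (#s + 1) * (#s).factorial := by
  rw [card_insert_of_notMem ha, Nat.factorial_succ]
  push_cast
  ring

section Partitions

variable {M : Finset ℕ} {π : Finset (Finset ℕ)} {i x : ℕ} {B C : Finset ℕ}

theorem isPartition_iff :
    IsPartition M π ↔ (∀ B ∈ π, B ⊆ M) ∧ ∅ ∉ π ∧ (∀ x ∈ M, ∃ B ∈ π, x ∈ B) ∧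
      ∀ B ∈ π, ∀ C ∈ π, ∀ x ∈ B, x ∈ C → B = C := by
  refine and_congr_right fun hsub => and_congr_right fun _ => ⟨fun h => ⟨fun x hx => ?_, ?_⟩, ?_⟩
  · obtain ⟨D, hD⟩ := card_eq_one.1 (h x hx)
    exact ⟨D, mem_filter.1 (hD ▸ mem_singleton_self D : D ∈ π.filter (x ∈ ·))⟩
  · intro B hB C hC x hxB hxC
    exact card_le_one.1 (h x (hsub B hB hxB)).le B (by simp [hB, hxB]) C (by simp [hC, hxC])
  · rintro ⟨hex, huniq⟩ x hx
    obtain ⟨B, hB, hxB⟩ := hex x hx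
    exact card_eq_one.2 ⟨B, eq_singleton_iff_unique_mem.2
      ⟨mem_filter.2 ⟨hB, hxB⟩,
        fun C hC => huniq C (mem_filter.1 hC).1 B hB x (mem_filter.1 hC).2 hxB⟩⟩

theorem mem_partitionsOf : π ∈ partitionsOf M ↔ IsPartition M π :=
  ⟨fun h => (mem_filter.1 h).2,
    fun h => mem_filter.2 ⟨mem_powerset.2 fun B hB => mem_powerset.2 (h.1 B hB), h⟩⟩

namespace IsPartition

theorem eq_of_mem_of_mem (h : IsPartition M π) (hB : B ∈ π) (hC : C ∈ π) (hxB : x ∈ B)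
    (hxC : x ∈ C) : B = C :=
  (isPartition_iff.1 h).2.2.2 B hB C hC x hxB hxC

theorem exists_mem (h : IsPartition M π) (hx : x ∈ M) : ∃ B ∈ π, x ∈ B :=
  (isPartition_iff.1 h).2.2.1 x hx

theorem nonempty_of_mem (h : IsPartition M π) (hB : B ∈ π) : B.Nonempty :=
  nonempty_iff_ne_empty.2 fun h0 => h.2.1 (h0 ▸ hB)

theorem blockOf_eq (h : IsPartition M π) (hB : B ∈ π) (hx : x ∈ B) : blockOf π x = B := by
  have : π.filter (x ∈ ·) = {B} :=
    eq_singleton_iff_unique_mem.2 ⟨mem_filter.2 ⟨hB, hx⟩,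
      fun C hC => h.eq_of_mem_of_mem (mem_filter.1 hC).1 hB (mem_filter.1 hC).2 hx⟩
  rw [blockOf, this, sup_singleton, id]

theorem blockOf_mem (h : IsPartition M π) (hx : x ∈ M) : blockOf π x ∈ π := by
  obtain ⟨B, hB, hxB⟩ := h.exists_mem hx
  rwa [h.blockOf_eq hB hxB]

theorem mem_blockOf (h : IsPartition M π) (hx : x ∈ M) : x ∈ blockOf π x := by
  obtain ⟨B, hB, hxB⟩ := h.exists_mem hx
  rwa [h.blockOf_eq hB hxB]

theorem notMem_of_mem (h : IsPartition M π) (hi : i ∉ M) (hB : B ∈ π) : i ∉ B :=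
  fun hiB => hi (h.1 B hB hiB)

theorem notMem_of_mem_insert_empty (h : IsPartition M π) (hi : i ∉ M) (hB : B ∈ insert ∅ π) :
    i ∉ B := by
  rcases mem_insert.1 hB with rfl | hB
  exacts [notMem_empty i, h.notMem_of_mem hi hB]

theorem partRemove (h : IsPartition M π) (T : Finset ℕ) :
    IsPartition (M \ T) (partRemove π T) := by
  refine isPartition_iff.2 ⟨?_, notMem_erase ∅ _, fun x hx => ?_, ?_⟩
  · simp only [TUX.partRemove, mem_erase, mem_image]
    rintro _ ⟨-, B, hB, rfl⟩
    exact sdiff_subset_sdiff (h.1 B hB) le_rfl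
  · obtain ⟨hxM, hxT⟩ := mem_sdiff.1 hx
    obtain ⟨B, hB, hxB⟩ := h.exists_mem hxM
    have hx' : x ∈ B \ T := mem_sdiff.2 ⟨hxB, hxT⟩
    exact ⟨B \ T, mem_erase.2 ⟨ne_empty_of_mem hx', mem_image_of_mem _ hB⟩, hx'⟩
  · simp only [TUX.partRemove, mem_erase, mem_image]
    rintro _ ⟨-, B, hB, rfl⟩ _ ⟨-, C, hC, rfl⟩ x hxB hxC
    rw [h.eq_of_mem_of_mem hB hC (mem_sdiff.1 hxB).1 (mem_sdiff.1 hxC).1]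

end IsPartition

theorem sum_blockOf {β : Type*} [AddCommMonoid β] (h : IsPartition M π) (f : Finset ℕ → β) :
    ∑ j ∈ M, f (blockOf π j) = ∑ B ∈ π, #B • f B := by
  rw [← sum_fiberwise_of_maps_to fun j hj => h.blockOf_mem hj]
  refine sum_congr rfl fun B hB => ?_
  have hfiber : M.filter (blockOf π · = B) = B := by
    ext j
    exact ⟨fun hj => (mem_filter.1 hj).2 ▸ h.mem_blockOf (mem_filter.1 hj).1,
      fun hj => mem_filter.2 ⟨h.1 B hB hj, h.blockOf_eq hB hj⟩⟩
  rw [sum_congr rfl fun j hj => congrArg f (mem_filter.1 hj).2, sum_const, hfiber]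

end Partitions

section AddToBlock

variable {M : Finset ℕ} {π σ : Finset (Finset ℕ)} {i : ℕ} {B : Finset ℕ}

theorem image_sdiff_singleton_eq_self (hπ : ∀ C ∈ π, i ∉ C) : π.image (· \ {i}) = π := by
  conv_rhs => rw [← image_id (s := π)]
  exact image_congr fun C hC => by simp [sdiff_singleton_eq_erase, erase_eq_of_notMem (hπ C hC)]

theorem IsPartition.addToBlock (h : IsPartition M σ) (hi : i ∉ M) (hB : B ∈ insert ∅ σ) :
    IsPartition (insert i M) (addToBlock σ i B) := by
  have hBM : B ⊆ M := by
    rcases mem_insert.1 hB with rfl | hB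
    exacts [empty_subset M, h.1 B hB]
  have hdisj : ∀ C ∈ σ.erase B, ∀ x ∈ insert i B, x ∉ C := by
    intro C hC x hx hxC
    obtain ⟨hCB, hC⟩ := mem_erase.1 hC
    rcases mem_insert.1 hx with rfl | hxB
    · exact h.notMem_of_mem hi hC hxC
    · have hBσ : B ∈ σ := (mem_insert.1 hB).resolve_left (ne_empty_of_mem hxB)
      exact hCB (h.eq_of_mem_of_mem hC hBσ hxC hxB)
  refine isPartition_iff.2 ⟨fun C hC => ?_, fun h0 => ?_, fun x hx => ?_, ?_⟩
  · rcases mem_insert.1 hC with rfl | hC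
    exacts [insert_subset_insert i hBM, (h.1 C (mem_of_mem_erase hC)).trans (subset_insert i M)]
  · rcases mem_insert.1 h0 with h0 | h0
    exacts [insert_ne_empty i B h0.symm, h.2.1 (mem_of_mem_erase h0)]
  · rcases mem_insert.1 hx with rfl | hx
    · exact ⟨insert x B, mem_insert_self _ _, mem_insert_self x B⟩
    obtain ⟨D, hD, hxD⟩ := h.exists_mem hx
    by_cases hDB : D = B
    · exact ⟨insert i B, mem_insert_self _ _, mem_insert_of_mem (hDB ▸ hxD)⟩
    · exact ⟨D, mem_insert_of_mem (mem_erase.2 ⟨hDB, hD⟩), hxD⟩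
  · intro C hC D hD x hxC hxD
    rcases mem_insert.1 hC with rfl | hC <;> rcases mem_insert.1 hD with rfl | hD
    · rfl
    · exact absurd hxD (hdisj D hD x hxC)
    · exact absurd hxC (hdisj C hC x hxD)
    · exact h.eq_of_mem_of_mem (mem_of_mem_erase hC) (mem_of_mem_erase hD) hxC hxD

theorem blockOf_addToBlock (h : IsPartition M σ) (hi : i ∉ M) (hB : B ∈ insert ∅ σ) :
    blockOf (addToBlock σ i B) i = insert i B :=
  (h.addToBlock hi hB).blockOf_eq (mem_insert_self _ _) (mem_insert_self i B)

theorem partRemove_addToBlock (h : IsPartition M σ) (hi : i ∉ M) (hB : B ∈ insert ∅ σ) :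
    partRemove (addToBlock σ i B) {i} = σ := by
  have hrest : (σ.erase B).image (· \ {i}) = σ.erase B :=
    image_sdiff_singleton_eq_self fun C hC => h.notMem_of_mem hi (mem_of_mem_erase hC)
  rw [partRemove, TUX.addToBlock, image_insert, hrest, sdiff_singleton_eq_erase,
    erase_insert (h.notMem_of_mem_insert_empty hi hB)]
  rcases mem_insert.1 hB with rfl | hB
  · rw [erase_insert_eq_erase, erase_eq_of_notMem h.2.1, erase_eq_of_notMem h.2.1]
  · rw [insert_erase hB, erase_eq_of_notMem h.2.1]

theorem IsPartition.addToBlock_partRemove (h : IsPartition M π) (hi : i ∈ M) :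
    TUX.addToBlock (TUX.partRemove π {i}) i (blockOf π i \ {i}) = π := by
  set B₀ := blockOf π i
  have hB₀ : B₀ ∈ π := h.blockOf_mem hi
  have hiB₀ : i ∈ B₀ := h.mem_blockOf hi
  have hrest : (π.erase B₀).image (· \ {i}) = π.erase B₀ :=
    image_sdiff_singleton_eq_self fun C hC hiC =>
      (ne_of_mem_erase hC) (h.eq_of_mem_of_mem (mem_of_mem_erase hC) hB₀ hiC hiB₀)
  have hnot : B₀ \ {i} ∉ π.erase B₀ := fun hmem => by
    obtain ⟨hne, hmem⟩ := mem_erase.1 hmem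
    obtain ⟨x, hx⟩ := h.nonempty_of_mem hmem
    exact hne (h.eq_of_mem_of_mem hmem hB₀ hx (mem_sdiff.1 hx).1)
  have h0 : ∅ ∉ π.erase B₀ := fun h0 => h.2.1 (mem_of_mem_erase h0)
  rw [TUX.partRemove, ← insert_erase hB₀, image_insert, hrest, TUX.addToBlock, erase_right_comm,
    erase_insert_eq_erase, erase_eq_of_notMem hnot, erase_eq_of_notMem h0,
    sdiff_singleton_eq_erase, insert_erase hiB₀]

theorem addToBlock_empty (hσ : ∅ ∉ σ) : addToBlock σ i ∅ = insert {i} σ := by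
  rw [TUX.addToBlock, insert_empty, erase_eq_of_notMem hσ]

theorem sum_partitionsOf_insert {β : Type*} [AddCommMonoid β] (hi : i ∉ M)
    (f : Finset (Finset ℕ) → β) :
    ∑ π ∈ partitionsOf (insert i M), f π =
      ∑ σ ∈ partitionsOf M, ∑ B ∈ insert ∅ σ, f (addToBlock σ i B) := by
  have hM : insert i M \ {i} = M := by rw [sdiff_singleton_eq_erase, erase_insert hi]
  rw [← sum_sigma (partitionsOf M) (insert ∅ ·) fun p => f (addToBlock p.1 i p.2)]
  refine sum_nbij' (fun π => ⟨partRemove π {i}, blockOf π i \ {i}⟩)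
    (fun p => addToBlock p.1 i p.2) (fun π hπ => ?_) (fun p hp => ?_) (fun π hπ => ?_)
    (fun p hp => ?_) (fun π hπ => ?_)
  · have hπ := mem_partitionsOf.1 hπ
    refine mem_sigma.2 ⟨mem_partitionsOf.2 (hM ▸ hπ.partRemove {i}), ?_⟩
    by_cases h0 : blockOf π i \ {i} = ∅
    · exact h0 ▸ mem_insert_self _ _
    · exact mem_insert_of_mem (mem_erase.2 ⟨h0, mem_image_of_mem _
        (hπ.blockOf_mem (mem_insert_self i M))⟩)
  · obtain ⟨hσ, hB⟩ := mem_sigma.1 hp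
    exact mem_partitionsOf.2 ((mem_partitionsOf.1 hσ).addToBlock hi hB)
  · exact (mem_partitionsOf.1 hπ).addToBlock_partRemove (mem_insert_self i M)
  · obtain ⟨hσ, hB⟩ := mem_sigma.1 hp
    have hσ := mem_partitionsOf.1 hσ
    simp only [partRemove_addToBlock hσ hi hB, blockOf_addToBlock hσ hi hB,
      sdiff_singleton_eq_erase, erase_insert (hσ.notMem_of_mem_insert_empty hi hB)]
  · rw [(mem_partitionsOf.1 hπ).addToBlock_partRemove (mem_insert_self i M)]

theorem prod_addToBlock (h : IsPartition M σ) (hi : i ∉ M) (hB : B ∈ insert ∅ σ) :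
    ∏ C ∈ addToBlock σ i B, ((#C - 1).factorial : ℝ) =
      (#B).factorial * ∏ C ∈ σ.erase B, ((#C - 1).factorial : ℝ) := by
  have hnot : insert i B ∉ σ.erase B := fun hmem =>
    h.notMem_of_mem hi (mem_of_mem_erase hmem) (mem_insert_self i B)
  rw [TUX.addToBlock, prod_insert hnot, card_insert_of_notMem (h.notMem_of_mem_insert_empty hi hB),
    Nat.add_sub_cancel]

theorem pstar_insert_singleton (h : IsPartition M σ) (hi : i ∉ M) :
    pstar (insert i M) (insert {i} σ) = pstar M σ / (#M + 1) := by
  rw [← addToBlock_empty h.2.1, pstar, pstar, prod_addToBlock h hi (mem_insert_self _ _),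
    erase_eq_of_notMem h.2.1, factorial_card_insert hi, card_empty, Nat.factorial_zero,
    Nat.cast_one, one_mul, div_div, mul_comm]

theorem pstar_addToBlock (h : IsPartition M σ) (hi : i ∉ M) (hB : B ∈ σ) :
    pstar (insert i M) (addToBlock σ i B) = #B * pstar M σ / (#M + 1) := by
  rw [pstar, pstar, prod_addToBlock h hi (mem_insert_of_mem hB), factorial_card_insert hi,
    ← mul_prod_erase σ _ hB, ← Nat.mul_factorial_pred (card_pos.2 (h.nonempty_of_mem hB)).ne']
  have : ((#M).factorial : ℝ) ≠ 0 := by positivity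
  push_cast
  field_simp

theorem sum_pstar_mul_addToBlock (h : IsPartition M σ) (hi : i ∉ M) (g : Finset (Finset ℕ) → ℝ) :
    ∑ B ∈ insert ∅ σ, pstar (insert i M) (addToBlock σ i B) * g (addToBlock σ i B) =
      pstar M σ *
        (((#M : ℝ) + 1)⁻¹ * (g (insert {i} σ) + ∑ B ∈ σ, #B * g (addToBlock σ i B))) := by
  rw [sum_insert h.2.1, addToBlock_empty h.2.1, pstar_insert_singleton h hi,
    sum_congr rfl fun B hB => by rw [pstar_addToBlock h hi hB], mul_add, mul_add, mul_sum,
    mul_sum]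
  congr 1
  · ring
  · exact sum_congr rfl fun B _ => by ring

end AddToBlock

end TUX

open TUX in
theorem avg_restrict_comm_general (N : Finset ℕ) (w : Game) (i : ℕ) (hi : i ∈ N) :
    ∀ S ⊆ N.erase i, avg N w S = avg (N.erase i) (restrict1 N w i) S := by
  intro S hS
  rw [avg, avg, erase_sdiff_comm]
  have hiNS : i ∈ N \ S := mem_sdiff.2 ⟨hi, fun hiS => notMem_erase i N (hS hiS)⟩
  generalize hM : (N \ S).erase i = M
  have hiM : i ∉ M := hM ▸ notMem_erase i _
  have hNS : N \ S = insert i M := hM ▸ (insert_erase hiNS).symm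
  have hcard : (#N : ℝ) - #S = #M + 1 := by
    rw [← cast_card_sdiff (hS.trans (erase_subset i N)), hNS, card_insert_of_notMem hiM,
      Nat.cast_succ]
  rw [hNS, sum_partitionsOf_insert hiM]
  refine sum_congr rfl fun σ hσ => ?_
  have hσ := mem_partitionsOf.1 hσ
  rw [sum_pstar_mul_addToBlock hσ hiM, restrict1, hcard, hM,
    sum_blockOf hσ fun B => w S (addToBlock σ i B)]
  simp only [nsmul_eq_mul]

open TUX in
/-- Averaging and restriction commute:
`(v̄_w)₋ᵢ = v̄_{w₋ᵢ}` as TU games on `N ∖ {i}`. -/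
theorem avg_restrict_comm (N : Finset ℕ) (w : Game) (hw : IsTUX w) (i : ℕ) (hi : i ∈ N) :
    ∀ S ⊆ N.erase i, avg N w S = avg (N.erase i) (restrict1 N w i) S :=
  avg_restrict_comm_general N w i hi
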